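/- arXiv:2410.07008 — 2 statements merged into one kernel-verified Lean document; each statement's English description precedes it below -/
import Mathlib

section
/- Let F be an algebraically closed field of characteristic ≠ 2, R = F[x₁,…,x_m] ⊗ Λ(ξ₁,…,ξ_n), and J the ideal generated by the ξ_k. Let φ : R → R be a parity-preserving F-algebra endomorphism with φ(x_i) ≡ x_i (mod J) for all i and φ(ξ_k) ≡ ξ_k (mod J²) for all k. Then the additive map ν := φ − id satisfies ν^{n+1} = 0, and hence φ is an automorphism of R. -/
open TensorProduct MvPolynomial

noncomputable section

variable (F : Type*) [Field F] (m n : ℕ)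

abbrev PolyA := MvPolynomial (Fin m) F
abbrev ExtA := ExteriorAlgebra F (Fin n → F)
abbrev SAlg := PolyA F m ⊗[F] ExtA F n

/-- even coordinate x_i -/
def xg (i : Fin m) : SAlg F m n := (X i) ⊗ₜ 1

/-- odd coordinate ξ_k -/
def xig (k : Fin n) : SAlg F m n := 1 ⊗ₜ (ExteriorAlgebra.ι F (Pi.single k 1))

/-- ideal J generated by the odd coordinates -/
def Jg : Ideal (SAlg F m n) := Ideal.span (Set.range (xig F m n))

/-- the ideal J² -/
def Jsq : Ideal (SAlg F m n) :=
  Ideal.span {r | ∃ u ∈ Jg F m n, ∃ v ∈ Jg F m n, r = u * v}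

/-- the parity involution, identity on polynomials and negation of ξ's -/
def parityInvol : SAlg F m n →ₐ[F] SAlg F m n :=
  Algebra.TensorProduct.map (AlgHom.id F (PolyA F m)) (ExteriorAlgebra.map (-LinearMap.id))

/-- the even part, as the subalgebra fixed by the parity involution -/
def evenA : Subalgebra F (SAlg F m n) :=
  AlgHom.equalizer (parityInvol F m n) (AlgHom.id F (SAlg F m n))

/-- the odd part, the (-1)-eigenspace of the parity involution -/
def oddP : Submodule F (SAlg F m n) :=
  LinearMap.ker ((parityInvol F m n).toLinearMap + LinearMap.id)

/-- a Z₂-homogeneous ideal -/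
def IsHomog (I : Ideal (SAlg F m n)) : Prop :=
  ∀ a ∈ evenA F m n, ∀ b ∈ oddP F m n, a + b ∈ I → a ∈ I ∧ b ∈ I

/-- a maximal Z₂-homogeneous ideal -/
def IsMaxHomog (I : Ideal (SAlg F m n)) : Prop :=
  IsHomog F m n I ∧ I ≠ ⊤ ∧ ∀ I', IsHomog F m n I' → I' ≠ ⊤ → I ≤ I' → I' = I

/-- the canonical projection R → R/J ≅ F[x₁,…,x_m] -/
def projP : SAlg F m n →ₐ[F] PolyA F m :=
  Algebra.TensorProduct.lift (AlgHom.id F (PolyA F m))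
    ((Algebra.ofId F (PolyA F m)).comp ExteriorAlgebra.algebraMapInv)
    (fun _ _ => Commute.all _ _)

/-- determinant of a square matrix over a possibly noncommutative ring -/
def sdet {R : Type*} [Ring R] {N : ℕ} (M : Matrix (Fin N) (Fin N) R) : R :=
  ∑ σ : Equiv.Perm (Fin N),
    (Equiv.Perm.sign σ : ℤ) • ((List.finRange N).map fun i => M (σ i) i).prod

/-- the even super derivation ∂/∂x_j of R -/
def Dx (j : Fin m) : SAlg F m n →ₗ[F] SAlg F m n :=
  TensorProduct.map (pderiv j).toLinearMap LinearMap.id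

/-- the odd super derivation ∂/∂ξ_l of R -/
def Dxi (l : Fin n) : SAlg F m n →ₗ[F] SAlg F m n :=
  TensorProduct.map LinearMap.id
    (CliffordAlgebra.contractLeft (Q := (0 : QuadraticForm F (Fin n → F))) (LinearMap.proj l))

end

/- ### Auxiliary material -/

noncomputable section AuxDefs

/-- `J` as an `F`-submodule. -/
def JF (F : Type*) [Field F] (m n : ℕ) : Submodule F (SAlg F m n) :=
  Submodule.restrictScalars F (Jg F m n)

/-- the `F`-span of the odd generators. -/
def Wg (F : Type*) [Field F] (m n : ℕ) : Submodule F (SAlg F m n) :=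
  Submodule.span F (Set.range (xig F m n))

end AuxDefs

noncomputable section Aux

variable {F : Type*} [Field F] {m n : ℕ}

lemma extPow_eq_bot :
    (LinearMap.range (ExteriorAlgebra.ι F (M := Fin n → F))) ^ (n + 1) = ⊥ := by
  have h : Submodule.span F
      (Set.range (ExteriorAlgebra.ιMulti F (n+1) (M := Fin n → F))) = ⊥ := by
    rw [Submodule.span_eq_bot]
    rintro _ ⟨v, rfl⟩
    apply AlternatingMap.map_linearDependent
    intro hli
    have := hli.fintype_card_le_finrank
    simp [Module.finrank_fin_fun] at this
  exact (ExteriorAlgebra.ιMulti_span_fixedDegree F (n+1)).symm.trans h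

lemma ext_comm (v : Fin n → F) (w : ExtA F n) :
    ExteriorAlgebra.ι F v * w
      = ExteriorAlgebra.map (-LinearMap.id) w * ExteriorAlgebra.ι F v := by
  induction w using ExteriorAlgebra.induction with
  | algebraMap r => rw [AlgHom.commutes]; exact (Algebra.commutes r _).symm
  | ι x =>
      rw [ExteriorAlgebra.map_apply_ι]
      simp only [LinearMap.neg_apply, LinearMap.id_coe, id_eq, map_neg, neg_mul]
      exact eq_neg_of_add_eq_zero_left (ExteriorAlgebra.ι_add_mul_swap v x)
  | mul a b ha hb => rw [← mul_assoc, ha, mul_assoc, hb, ← mul_assoc, map_mul]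
  | add a b ha hb => rw [mul_add, ha, hb, map_add, add_mul]

lemma xig_comm (k : Fin n) (a : SAlg F m n) :
    xig F m n k * a = parityInvol F m n a * xig F m n k := by
  induction a using TensorProduct.induction_on with
  | zero => simp
  | tmul p w =>
      simp only [xig, parityInvol, Algebra.TensorProduct.map_tmul,
        Algebra.TensorProduct.tmul_mul_tmul, AlgHom.coe_id, id_eq, one_mul, mul_one]
      rw [ext_comm]
  | add x y hx hy => rw [mul_add, hx, hy, map_add, add_mul]

lemma Jg_mul_right {x : SAlg F m n} (hx : x ∈ Jg F m n) (b : SAlg F m n) :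
    x * b ∈ Jg F m n := by
  induction hx using Submodule.span_induction with
  | mem x hxs =>
      obtain ⟨k, rfl⟩ := hxs
      rw [xig_comm]
      exact Ideal.mul_mem_left _ _ (Ideal.subset_span ⟨k, rfl⟩)
  | zero => simp
  | add x y _ _ hx hy => rw [add_mul]; exact add_mem hx hy
  | smul a x _ hx => rw [smul_eq_mul, mul_assoc]; exact Ideal.mul_mem_left _ _ hx

lemma Jsq_le_Jg : Jsq F m n ≤ Jg F m n := by
  rw [Jsq, Ideal.span_le]
  rintro r ⟨u, hu, v, hv, rfl⟩
  exact Ideal.mul_mem_left _ _ hv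

lemma JFpow_mul_left (k : ℕ) (r : SAlg F m n) {x : SAlg F m n}
    (hx : x ∈ (JF F m n) ^ (k + 1)) :
    r * x ∈ (JF F m n) ^ (k + 1) := by
  rw [pow_succ' (JF F m n) k] at hx ⊢
  refine Submodule.mul_induction_on hx (fun u hu v hv => ?_) (fun x y hx hy => ?_)
  · rw [← mul_assoc]
    exact Submodule.mul_mem_mul (Ideal.mul_mem_left _ r hu) hv
  · rw [mul_add]; exact add_mem hx hy

lemma Jsq_le_JF2 {x : SAlg F m n} (hx : x ∈ Jsq F m n) :
    x ∈ (JF F m n) ^ 2 := by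
  induction hx using Submodule.span_induction with
  | mem x hxs =>
      obtain ⟨u, hu, v, hv, rfl⟩ := hxs
      rw [sq]
      exact Submodule.mul_mem_mul hu hv
  | zero => simp
  | add x y _ _ hx hy => exact add_mem hx hy
  | smul a x _ hx => rw [smul_eq_mul]; exact JFpow_mul_left 1 a hx

lemma Wg_eq_map :
    Wg F m n = Submodule.map (Algebra.TensorProduct.includeRight :
        ExtA F n →ₐ[F] SAlg F m n).toLinearMap
      (LinearMap.range (ExteriorAlgebra.ι F (M := Fin n → F))) := by
  have h1 : Set.range (xig F m n)
      = (Algebra.TensorProduct.includeRight :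
          ExtA F n →ₐ[F] SAlg F m n).toLinearMap ''
        (Set.range fun k : Fin n => ExteriorAlgebra.ι F (Pi.single k (1:F))) := by
    rw [← Set.range_comp]; rfl
  rw [Wg, h1, Submodule.span_image]
  congr 1
  have h2 : (Set.range fun k : Fin n => ExteriorAlgebra.ι F (Pi.single k (1:F)))
      = ExteriorAlgebra.ι F '' (Set.range fun k : Fin n => (Pi.single k (1:F) : Fin n → F)) := by
    rw [← Set.range_comp]; rfl
  rw [h2, Submodule.span_image]
  have h3 : (Submodule.span F
      (Set.range fun k : Fin n => (Pi.single k (1:F) : Fin n → F))) = ⊤ := by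
    have hb : ⇑(Pi.basisFun F (Fin n)) = fun k => (Pi.single k (1:F) : Fin n → F) := by
      funext k; simp [Pi.basisFun_apply]
    rw [← hb]; exact Module.Basis.span_eq _
  rw [h3, Submodule.map_top]

lemma Wg_pow_eq_bot : (Wg F m n) ^ (n + 1) = ⊥ := by
  rw [Wg_eq_map, ← Submodule.map_pow, extPow_eq_bot, Submodule.map_bot]

lemma top_mul_left (a : SAlg F m n) (P : Submodule F (SAlg F m n)) {x : SAlg F m n}
    (hx : x ∈ (⊤ : Submodule F (SAlg F m n)) * P) :
    a * x ∈ (⊤ : Submodule F (SAlg F m n)) * P := by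
  refine Submodule.mul_induction_on hx (fun b _ w hw => ?_) (fun u v hu hv => ?_)
  · rw [← mul_assoc]; exact Submodule.mul_mem_mul Submodule.mem_top hw
  · rw [mul_add]; exact add_mem hu hv

lemma Wg_mul_top_le :
    Wg F m n * (⊤ : Submodule F (SAlg F m n)) ≤ ⊤ * Wg F m n := by
  rw [Submodule.mul_le]
  intro w hw a _
  induction hw using Submodule.span_induction with
  | mem x hxs =>
      obtain ⟨k, rfl⟩ := hxs
      rw [xig_comm]
      exact Submodule.mul_mem_mul Submodule.mem_top (Submodule.subset_span ⟨k, rfl⟩)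
  | zero => rw [zero_mul]; exact zero_mem _
  | add x y _ _ hx hy => rw [add_mul]; exact add_mem hx hy
  | smul c x _ hx => rw [smul_mul_assoc]; exact Submodule.smul_mem _ c hx

set_option maxHeartbeats 1000000 in
lemma shuffle (P : Submodule F (SAlg F m n)) :
    ((⊤ : Submodule F (SAlg F m n)) * Wg F m n) * (⊤ * P) ≤ ⊤ * (Wg F m n * P) :=
  calc ((⊤ : Submodule F (SAlg F m n)) * Wg F m n) * (⊤ * P)
      = ⊤ * ((Wg F m n * ⊤) * P) := by
        rw [mul_assoc (⊤ : Submodule F (SAlg F m n)) (Wg F m n) (⊤ * P),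
          ← mul_assoc (Wg F m n) (⊤ : Submodule F (SAlg F m n)) P]
    _ ≤ ⊤ * ((⊤ * Wg F m n) * P) :=
        mul_le_mul' le_rfl (mul_le_mul' Wg_mul_top_le le_rfl)
    _ = (⊤ * ⊤) * (Wg F m n * P) := by
        rw [mul_assoc (⊤ : Submodule F (SAlg F m n)) (Wg F m n) P,
          ← mul_assoc (⊤ : Submodule F (SAlg F m n)) (⊤ : Submodule F (SAlg F m n))
            (Wg F m n * P)]
    _ ≤ ⊤ * (Wg F m n * P) := mul_le_mul' le_top le_rfl

lemma JF_le_top_mul_Wg {x : SAlg F m n} (hx : x ∈ JF F m n) :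
    x ∈ (⊤ : Submodule F (SAlg F m n)) * Wg F m n := by
  induction hx using Submodule.span_induction with
  | mem x hxs =>
      obtain ⟨k, rfl⟩ := hxs
      have h := Submodule.mul_mem_mul
        (Submodule.mem_top : (1 : SAlg F m n) ∈ (⊤ : Submodule F (SAlg F m n)))
        (Submodule.subset_span (R := F) (s := Set.range (xig F m n)) ⟨k, rfl⟩)
      rwa [one_mul] at h
  | zero => exact zero_mem _
  | add x y _ _ hx hy => exact add_mem hx hy
  | smul a x _ hx => rw [smul_eq_mul]; exact top_mul_left a _ hx

lemma JFpow_le_top_mul_Wgpow (j : ℕ) {x : SAlg F m n} (hx : x ∈ (JF F m n) ^ (j + 1)) :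
    x ∈ (⊤ : Submodule F (SAlg F m n)) * (Wg F m n) ^ (j + 1) := by
  induction j generalizing x with
  | zero =>
      rw [pow_one (JF F m n)] at hx
      rw [pow_one (Wg F m n)]
      exact JF_le_top_mul_Wg hx
  | succ j ih =>
      rw [pow_succ' (JF F m n) (j+1)] at hx
      refine Submodule.mul_induction_on hx (fun u hu v hv => ?_) (fun a b ha hb => add_mem ha hb)
      have h1 : u * v ∈ ((⊤ : Submodule F (SAlg F m n)) * Wg F m n) * (⊤ * (Wg F m n) ^ (j+1)) :=
        Submodule.mul_mem_mul (JF_le_top_mul_Wg hu) (ih hv)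
      have h2 := shuffle ((Wg F m n) ^ (j+1)) h1
      rwa [← pow_succ' (Wg F m n) (j+1)] at h2

lemma JF_pow_eq_bot : (JF F m n) ^ (n + 1) = ⊥ := by
  refine le_antisymm (fun x hx => ?_) bot_le
  have h := JFpow_le_top_mul_Wgpow n hx
  rwa [Wg_pow_eq_bot, Submodule.mul_bot] at h

lemma adjoin_gens_eq_top :
    Algebra.adjoin F (Set.range (xg F m n) ∪ Set.range (xig F m n)) = ⊤ := by
  rw [eq_top_iff]
  rintro a -
  set A := Algebra.adjoin F (Set.range (xg F m n) ∪ Set.range (xig F m n)) with hA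
  have hL : ∀ p : PolyA F m, (p ⊗ₜ (1 : ExtA F n)) ∈ A := by
    intro p
    induction p using MvPolynomial.induction_on with
    | C a =>
        have : (C a ⊗ₜ (1 : ExtA F n)) = algebraMap F (SAlg F m n) a := rfl
        rw [this]; exact A.algebraMap_mem a
    | add p q hp hq =>
        rw [add_tmul]; exact add_mem hp hq
    | mul_X p i hp =>
        have h : ((p * X i) ⊗ₜ (1 : ExtA F n) : SAlg F m n)
            = (p ⊗ₜ (1 : ExtA F n)) * xg F m n i := by
          rw [xg, Algebra.TensorProduct.tmul_mul_tmul, mul_one]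
        rw [h]
        exact mul_mem hp (Algebra.subset_adjoin (Or.inl ⟨i, rfl⟩))
  have hR : ∀ w : ExtA F n, ((1 : PolyA F m) ⊗ₜ w) ∈ A := by
    intro w
    induction w using ExteriorAlgebra.induction with
    | algebraMap r =>
        have h : ((1 : PolyA F m) ⊗ₜ (algebraMap F (ExtA F n) r) : SAlg F m n)
            = algebraMap F (SAlg F m n) r := by
          rw [Algebra.TensorProduct.algebraMap_apply,
            Algebra.algebraMap_eq_smul_one (R := F) (A := ExtA F n), tmul_smul,
            smul_tmul', ← Algebra.algebraMap_eq_smul_one]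
        rw [h]; exact A.algebraMap_mem r
    | ι v =>
        have hv : ExteriorAlgebra.ι F v
            = ∑ k : Fin n, v k • ExteriorAlgebra.ι F (Pi.single k (1:F)) := by
          conv_lhs => rw [show v = ∑ k : Fin n, v k • (Pi.single k (1:F) : Fin n → F) from by
            funext j; simp [Pi.single_apply]]
          rw [map_sum]
          simp
        rw [hv, tmul_sum]
        refine sum_mem fun k _ => ?_
        rw [tmul_smul]
        exact A.smul_mem (Algebra.subset_adjoin (Or.inr ⟨k, rfl⟩)) _
    | mul a b ha hb =>
        have : ((1 : PolyA F m) ⊗ₜ (a * b)) = (1 ⊗ₜ a : SAlg F m n) * (1 ⊗ₜ b) := by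
          rw [Algebra.TensorProduct.tmul_mul_tmul, mul_one]
        rw [this]; exact mul_mem ha hb
    | add a b ha hb => rw [tmul_add]; exact add_mem ha hb
  induction a using TensorProduct.induction_on with
  | zero => exact zero_mem _
  | tmul p w =>
      have : (p ⊗ₜ w : SAlg F m n) = (p ⊗ₜ 1) * (1 ⊗ₜ w) := by
        rw [Algebra.TensorProduct.tmul_mul_tmul, mul_one, one_mul]
      rw [this]; exact mul_mem (hL p) (hR w)
  | add x y hx hy => exact add_mem hx hy

section Phi

variable (φ : SAlg F m n →ₐ[F] SAlg F m n)
variable (hx : ∀ i, φ (xg F m n i) - xg F m n i ∈ Jg F m n)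
variable (hξ : ∀ k, φ (xig F m n k) - xig F m n k ∈ Jsq F m n)

include hx hξ in
lemma nu_mem_Jg : ∀ r : SAlg F m n, φ r - r ∈ Jg F m n := by
  intro r
  have hr : r ∈ Algebra.adjoin F (Set.range (xg F m n) ∪ Set.range (xig F m n)) := by
    rw [adjoin_gens_eq_top]; trivial
  induction hr using Algebra.adjoin_induction with
  | mem x hxs =>
      rcases hxs with ⟨i, rfl⟩ | ⟨k, rfl⟩
      · exact hx i
      · exact Jsq_le_Jg (hξ k)
  | algebraMap r => rw [AlgHom.commutes, sub_self]; exact zero_mem _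
  | add x y _ _ hxx hyy =>
      have : φ (x + y) - (x + y) = (φ x - x) + (φ y - y) := by rw [map_add]; abel
      rw [this]; exact add_mem hxx hyy
  | mul x y _ _ hxx hyy =>
      have : φ (x * y) - x * y = φ x * (φ y - y) + (φ x - x) * y := by
        rw [map_mul, mul_sub, sub_mul]; abel
      rw [this]
      exact add_mem (Ideal.mul_mem_left _ _ hyy) (Jg_mul_right hxx y)

include hx hξ in
lemma phi_Jg_mem {u : SAlg F m n} (hu : u ∈ Jg F m n) : φ u ∈ Jg F m n := by
  have h := nu_mem_Jg φ hx hξ u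
  have h2 : φ u = (φ u - u) + u := by abel
  rw [h2]; exact add_mem h hu

include hx hξ in
lemma nu_sq : ∀ u ∈ JF F m n, φ u - u ∈ (JF F m n) ^ 2 := by
  intro u hu
  induction hu using Submodule.span_induction with
  | mem x hxs =>
      obtain ⟨k, rfl⟩ := hxs
      exact Jsq_le_JF2 (hξ k)
  | zero => rw [map_zero, sub_zero]; exact zero_mem _
  | add x y _ _ hxx hyy =>
      have h : φ (x + y) - (x + y) = (φ x - x) + (φ y - y) := by rw [map_add]; abel
      rw [h]; exact add_mem hxx hyy
  | smul a x hxm hxx =>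
      have h : φ (a • x) - a • x = φ a * (φ x - x) + (φ a - a) * x := by
        rw [smul_eq_mul, map_mul, mul_sub, sub_mul]; abel
      rw [h]
      refine add_mem (JFpow_mul_left 1 (φ a) hxx) ?_
      have h1 : (φ a - a) ∈ JF F m n := nu_mem_Jg φ hx hξ a
      have hxm' : x ∈ JF F m n := hxm
      rw [pow_two (JF F m n)]
      exact Submodule.mul_mem_mul h1 hxm'

include hx hξ in
lemma nu_step : ∀ k : ℕ, ∀ u ∈ (JF F m n) ^ (k + 1), φ u - u ∈ (JF F m n) ^ (k + 2) := by
  intro k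
  induction k with
  | zero =>
      intro u hu
      rw [pow_one (JF F m n)] at hu
      exact nu_sq φ hx hξ u hu
  | succ k ih =>
      intro u hu
      rw [pow_succ' (JF F m n) (k+1)] at hu
      refine Submodule.mul_induction_on hu (fun a ha b hb => ?_) (fun a b hap hbp => ?_)
      · have h : φ (a * b) - a * b = φ a * (φ b - b) + (φ a - a) * b := by
          rw [map_mul, mul_sub, sub_mul]; abel
        rw [h]
        have e : k + 1 + 2 = (k + 2) + 1 := by omega
        rw [e, pow_succ' (JF F m n) (k+2)]
        refine add_mem ?_ ?_
        · exact Submodule.mul_mem_mul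
            ((phi_Jg_mem φ hx hξ ha : φ a ∈ Jg F m n) : φ a ∈ JF F m n) (ih b hb)
        · have h1 := Submodule.mul_mem_mul (nu_sq φ hx hξ a ha) hb
          have e2 : (2 : ℕ) + (k + 1) = (k + 2) + 1 := by omega
          rw [← pow_add (JF F m n) 2 (k+1), e2] at h1
          rw [pow_succ' (JF F m n) (k+2)] at h1
          exact h1
      · have h : φ (a + b) - (a + b) = (φ a - a) + (φ b - b) := by rw [map_add]; abel
        rw [h]; exact add_mem hap hbp

include hx hξ in
lemma nu_iter_mem : ∀ (j : ℕ) (r : SAlg F m n),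
    (fun s => φ s - s)^[j + 1] r ∈ (JF F m n) ^ (j + 1) := by
  intro j
  induction j with
  | zero =>
      intro r
      rw [Function.iterate_one, pow_one (JF F m n)]
      exact nu_mem_Jg φ hx hξ r
  | succ j ih =>
      intro r
      rw [Function.iterate_succ_apply' (fun s => φ s - s) (j+1) r]
      exact nu_step φ hx hξ j _ (ih r)

end Phi
end Aux

/-- A parity-preserving endomorphism `φ` with `φ(x_i) ≡ x_i mod J` and
`φ(ξ_k) ≡ ξ_k mod J²` satisfies `(φ - id)^{n+1} = 0` and is an automorphism. -/
theorem endo_congruent_to_id_is_automorphism (F : Type*) [Field F] [IsAlgClosed F]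
    (hchar : ringChar F ≠ 2) (m n : ℕ) (φ : SAlg F m n →ₐ[F] SAlg F m n)
    (hev : ∀ a ∈ evenA F m n, φ a ∈ evenA F m n)
    (hod : ∀ b ∈ oddP F m n, φ b ∈ oddP F m n)
    (hx : ∀ i, φ (xg F m n i) - xg F m n i ∈ Jg F m n)
    (hξ : ∀ k, φ (xig F m n k) - xig F m n k ∈ Jsq F m n) :
    (∀ r : SAlg F m n, (fun s => φ s - s)^[n + 1] r = 0) ∧ Function.Bijective φ := by
  have hiter : ∀ r : SAlg F m n, (fun s => φ s - s)^[n + 1] r = 0 := by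
    intro r
    have h := nu_iter_mem φ hx hξ n r
    rw [JF_pow_eq_bot] at h
    simpa using h
  refine ⟨hiter, ?_⟩
  have hnil : IsNilpotent (φ.toLinearMap - LinearMap.id : Module.End F (SAlg F m n)) := by
    refine ⟨n + 1, LinearMap.ext fun r => ?_⟩
    have hfun : ⇑(φ.toLinearMap - LinearMap.id : Module.End F (SAlg F m n))
        = fun s => φ s - s := by funext s; simp
    rw [Module.End.pow_apply, hfun]
    simp only [LinearMap.zero_apply]
    exact hiter r
  have hunit : IsUnit (φ.toLinearMap : Module.End F (SAlg F m n)) := by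
    have h := IsNilpotent.isUnit_add_one (R := Module.End F (SAlg F m n)) hnil
    have he : (φ.toLinearMap - LinearMap.id : Module.End F (SAlg F m n)) + 1 = φ.toLinearMap := by
      ext s; simp
    rwa [he] at h
  exact (Module.End.isUnit_iff _).mp hunit
end

section
/- Let F be a field of characteristic ≠ 2 and let f₁,…,f_m be even elements and q₁,…,q_n odd elements of R = F[x₁,…,x_m] ⊗ Λ(ξ₁,…,ξ_n) such that the images of the f_i in R/J are algebraically independent generators of F[x₁,…,x_m] ≅ R/J and the images of the q_k in J/J² are F[x₁,…,x_m]-module generators whose coefficient matrix is invertible. Then the F-algebra endomorphism of R defined by x_i ↦ f_i, ξ_k ↦ q_k is an automorphism of R. -/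
open TensorProduct MvPolynomial

noncomputable section Aux

open ExteriorAlgebra

variable {F : Type*} [Field F] {m n : ℕ}

/-- In the exterior algebra, `ι v` commutes with `w` up to the parity involution. -/
lemma iota_mul_comm (v : Fin n → F) (w : ExtA F n) :
    ι F v * w = ExteriorAlgebra.map (-LinearMap.id) w * ι F v := by
  induction w using ExteriorAlgebra.induction with
  | algebraMap r => simp [Algebra.commutes]
  | ι x =>
      rw [map_apply_ι]
      have h := ExteriorAlgebra.ι_add_mul_swap (R := F) x v
      simp only [LinearMap.neg_apply, LinearMap.id_coe, id_eq, map_neg, neg_mul]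
      linear_combination (norm := abel) h
  | mul a b ha hb =>
      rw [← mul_assoc, ha, mul_assoc, hb, ← mul_assoc, map_mul]
  | add a b ha hb => rw [mul_add, map_add, add_mul, ha, hb]

lemma xig_mul_comm (l : Fin n) (r : SAlg F m n) :
    xig F m n l * r = parityInvol F m n r * xig F m n l := by
  induction r using TensorProduct.induction_on with
  | zero => simp
  | tmul p w =>
      simp only [xig, parityInvol, Algebra.TensorProduct.map_tmul,
        Algebra.TensorProduct.tmul_mul_tmul, AlgHom.id_apply, one_mul, mul_one]
      rw [iota_mul_comm]
  | add a b ha hb => rw [mul_add, map_add, add_mul, ha, hb]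



/-- word in the exterior algebra -/
def vword (L : List (Fin n)) : ExtA F n :=
  (L.map (fun l => ι F (Pi.single l 1))).prod

lemma vword_nil : vword ([] : List (Fin n)) = (1 : ExtA F n) := by simp [vword]

lemma vword_append (L₁ L₂ : List (Fin n)) :
    vword (L₁ ++ L₂) = (vword L₁ : ExtA F n) * vword L₂ := by
  simp [vword]

lemma vword_eq_iMulti (L : List (Fin n)) :
    vword L = ιMulti F L.length (fun i => Pi.single (L.get i) (1:F)) := by
  rw [ιMulti_apply, vword]
  conv_lhs => rw [← List.ofFn_get L, List.map_ofFn]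
  rfl

lemma vword_zero (L : List (Fin n)) (h : n < L.length) : vword (F := F) L = 0 := by
  rw [vword_eq_iMulti]
  apply AlternatingMap.map_linearDependent
  intro hli
  have := hli.fintype_card_le_finrank
  rw [Fintype.card_fin, Module.finrank_fintype_fun_eq_card, Fintype.card_fin] at this
  omega

lemma extA_finite : Module.Finite F (ExtA F n) := by
  classical
  have hfin : ({l : List (Fin n) | l.length ≤ n}).Finite := List.finite_length_le (Fin n) n
  have hspan : ∀ w : ExtA F n,
      w ∈ Submodule.span F (vword (F := F) '' {l : List (Fin n) | l.length ≤ n}) := by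
    intro w
    induction w using ExteriorAlgebra.induction with
    | algebraMap r =>
        have h1 : (algebraMap F (ExtA F n)) r = r • vword [] := by
          simp [vword_nil, Algebra.algebraMap_eq_smul_one]
        rw [h1]
        exact Submodule.smul_mem _ _ (Submodule.subset_span ⟨[], by simp, rfl⟩)
    | ι x =>
        have h1 : (ι F x : ExtA F n) = ∑ l : Fin n, x l • vword [l] := by
          have hx : x = ∑ l : Fin n, x l • (Pi.single l 1 : Fin n → F) := by
            conv_lhs => rw [← Finset.univ_sum_single x]
            refine Finset.sum_congr rfl fun l _ => ?_
            rw [← Pi.single_smul, smul_eq_mul, mul_one]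
          conv_lhs => rw [hx]
          rw [map_sum]
          refine Finset.sum_congr rfl fun l _ => ?_
          rw [map_smul]
          simp [vword]
        rw [h1]
        exact Submodule.sum_mem _ fun l _ =>
          Submodule.smul_mem _ _ (Submodule.subset_span
            ⟨[l], by have := l.pos; simp; omega, rfl⟩)
    | mul a b ha hb =>
        induction ha using Submodule.span_induction with
        | mem x hx =>
            induction hb using Submodule.span_induction with
            | mem y hy =>
                obtain ⟨L₁, hL₁, rfl⟩ := hx
                obtain ⟨L₂, hL₂, rfl⟩ := hy
                rw [← vword_append]
                by_cases hlen : (L₁ ++ L₂).length ≤ n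
                · exact Submodule.subset_span ⟨L₁ ++ L₂, hlen, rfl⟩
                · rw [vword_zero _ (by omega)]; exact Submodule.zero_mem _
            | zero => rw [mul_zero]; exact Submodule.zero_mem _
            | add y z _ _ hy hz => rw [mul_add]; exact Submodule.add_mem _ hy hz
            | smul c y _ hy => rw [mul_smul_comm]; exact Submodule.smul_mem _ _ hy
        | zero => rw [zero_mul]; exact Submodule.zero_mem _
        | add x y _ _ hx hy => rw [add_mul]; exact Submodule.add_mem _ hx hy
        | smul c x _ hx => rw [smul_mul_assoc]; exact Submodule.smul_mem _ _ hx
    | add a b ha hb => exact Submodule.add_mem _ ha hb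
  exact ⟨⟨(hfin.image _).toFinset, by
    rw [Set.Finite.coe_toFinset]; exact eq_top_iff.mpr fun w _ => hspan w⟩⟩



lemma Jg_mul_mem {a : SAlg F m n} (ha : a ∈ Jg F m n) (r : SAlg F m n) :
    a * r ∈ Jg F m n := by
  induction ha using Submodule.span_induction with
  | mem x hx =>
      obtain ⟨l, rfl⟩ := hx
      rw [xig_mul_comm]
      exact Submodule.smul_mem _ _ (Submodule.subset_span ⟨l, rfl⟩)
  | zero => rw [zero_mul]; exact Submodule.zero_mem _
  | add x y _ _ hx hy => rw [add_mul]; exact Submodule.add_mem _ hx hy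
  | smul s x _ hx =>
      rw [smul_eq_mul, mul_assoc, ← smul_eq_mul]
      exact Submodule.smul_mem _ _ hx

/-- powers of J as F-submodules -/
def Kpow (k : ℕ) : Submodule F (SAlg F m n) := ((Jg F m n).restrictScalars F) ^ k

lemma Kpow_add (i j : ℕ) :
    Kpow (F := F) (m := m) (n := n) (i + j)
      = Kpow (F := F) (m := m) (n := n) i * Kpow (F := F) (m := m) (n := n) j := by
  show ((Jg F m n).restrictScalars F) ^ (i + j) = _
  exact pow_add ((Jg F m n).restrictScalars F) i j

lemma mem_Kpow_mul {i j : ℕ} {a b : SAlg F m n} (ha : a ∈ Kpow (F := F) (m := m) (n := n) i)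
    (hb : b ∈ Kpow (F := F) (m := m) (n := n) j) :
    a * b ∈ Kpow (F := F) (m := m) (n := n) (i + j) := by
  rw [Kpow_add]; exact Submodule.mul_mem_mul ha hb

lemma mem_Kpow_one {a : SAlg F m n} :
    a ∈ Kpow (F := F) (m := m) (n := n) 1 ↔ a ∈ Jg F m n := by
  have h : Kpow (F := F) (m := m) (n := n) 1 = (Jg F m n).restrictScalars F := by
    show ((Jg F m n).restrictScalars F) ^ 1 = _
    exact pow_one ((Jg F m n).restrictScalars F)
  rw [h]; rfl

lemma Kpow_succ (k : ℕ) :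
    Kpow (F := F) (m := m) (n := n) (k + 1)
      = Kpow (F := F) (m := m) (n := n) k * ((Jg F m n).restrictScalars F) := by
  show ((Jg F m n).restrictScalars F) ^ (k + 1) = _
  exact pow_succ ((Jg F m n).restrictScalars F) k

lemma Kpow_succ' (k : ℕ) :
    Kpow (F := F) (m := m) (n := n) (k + 1)
      = ((Jg F m n).restrictScalars F) * Kpow (F := F) (m := m) (n := n) k := by
  show ((Jg F m n).restrictScalars F) ^ (k + 1) = _
  exact pow_succ' ((Jg F m n).restrictScalars F) k

lemma Kpow_left {k : ℕ} (r : SAlg F m n) {a : SAlg F m n}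
    (ha : a ∈ Kpow (F := F) (m := m) (n := n) (k + 1)) :
    r * a ∈ Kpow (F := F) (m := m) (n := n) (k + 1) := by
  induction k with
  | zero =>
      rw [mem_Kpow_one] at ha ⊢
      rw [← smul_eq_mul]
      exact Submodule.smul_mem _ _ ha
  | succ k ih =>
      rw [Kpow_succ'] at ha ⊢
      refine Submodule.mul_induction_on ha (fun x hx y hy => ?_) (fun x y hx hy => ?_)
      · rw [← mul_assoc]
        have hrx : r * x ∈ Jg F m n := by
          rw [← smul_eq_mul]; exact Submodule.smul_mem _ _ hx
        exact Submodule.mul_mem_mul hrx hy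
      · rw [mul_add]; exact Submodule.add_mem _ hx hy

lemma Kpow_right {k : ℕ} {a : SAlg F m n}
    (ha : a ∈ Kpow (F := F) (m := m) (n := n) (k + 1)) (r : SAlg F m n) :
    a * r ∈ Kpow (F := F) (m := m) (n := n) (k + 1) := by
  induction k with
  | zero =>
      rw [mem_Kpow_one] at ha ⊢
      exact Jg_mul_mem ha r
  | succ k ih =>
      rw [Kpow_succ] at ha ⊢
      refine Submodule.mul_induction_on ha (fun x hx y hy => ?_) (fun x y hx hy => ?_)
      · rw [mul_assoc]
        exact Submodule.mul_mem_mul hx (Jg_mul_mem hy r)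
      · rw [add_mul]; exact Submodule.add_mem _ hx hy

lemma Kpow_mono {k : ℕ} :
    Kpow (F := F) (m := m) (n := n) (k + 2) ≤ Kpow (F := F) (m := m) (n := n) (k + 1) := by
  intro a ha
  rw [Kpow_succ] at ha
  refine Submodule.mul_induction_on ha (fun x hx y hy => ?_)
    (fun x y hx hy => Submodule.add_mem _ hx hy)
  exact Kpow_right hx y

/-- word in SAlg -/
def wordS (L : List (Fin n)) : SAlg F m n := (L.map (xig F m n)).prod

lemma wordS_eq (L : List (Fin n)) :
    wordS (F := F) (m := m) L = (1 : PolyA F m) ⊗ₜ vword (F := F) L := by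
  induction L with
  | nil => simp [wordS, vword, Algebra.TensorProduct.one_def]
  | cons l L ih =>
      rw [wordS, vword, List.map_cons, List.map_cons, List.prod_cons, List.prod_cons,
        ← wordS, ← vword, ih, xig, Algebra.TensorProduct.tmul_mul_tmul, one_mul]

lemma wordS_zero {L : List (Fin n)} (h : n < L.length) :
    wordS (F := F) (m := m) L = 0 := by
  rw [wordS_eq, vword_zero L h, TensorProduct.tmul_zero]

/-- left ideal spanned by words of length k, as an F-submodule -/
def Wspan (k : ℕ) : Submodule F (SAlg F m n) :=
  Submodule.span F {x | ∃ r : SAlg F m n, ∃ L : List (Fin n), L.length = k ∧ x = r * wordS L}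

lemma Wspan_left {k : ℕ} (r : SAlg F m n) {a : SAlg F m n}
    (ha : a ∈ Wspan (F := F) (m := m) (n := n) k) :
    r * a ∈ Wspan (F := F) (m := m) (n := n) k := by
  induction ha using Submodule.span_induction with
  | mem x hx =>
      obtain ⟨r', L, hL, rfl⟩ := hx
      rw [← mul_assoc]
      exact Submodule.subset_span ⟨r * r', L, hL, rfl⟩
  | zero => rw [mul_zero]; exact Submodule.zero_mem _
  | add x y _ _ hx hy => rw [mul_add]; exact Submodule.add_mem _ hx hy
  | smul c x _ hx => rw [mul_smul_comm]; exact Submodule.smul_mem _ _ hx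

lemma Kpow_le_Wspan (k : ℕ) :
    Kpow (F := F) (m := m) (n := n) (k + 1) ≤ Wspan (F := F) (m := m) (n := n) (k + 1) := by
  induction k with
  | zero =>
      intro a ha
      rw [mem_Kpow_one] at ha
      induction ha using Submodule.span_induction with
      | mem x hx =>
          obtain ⟨l, rfl⟩ := hx
          refine Submodule.subset_span ⟨1, [l], rfl, ?_⟩
          simp [wordS]
      | zero => exact Submodule.zero_mem _
      | add x y _ _ hx hy => exact Submodule.add_mem _ hx hy
      | smul s x _ hx => rw [smul_eq_mul]; exact Wspan_left s hx
  | succ k ih =>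
      rw [Kpow_succ']
      refine Submodule.mul_le.mpr fun b hb a ha => ?_
      replace ha : a ∈ Wspan (F := F) (m := m) (n := n) (k + 1) := ih ha
      induction ha using Submodule.span_induction with
      | mem x hx =>
          obtain ⟨r, L, hL, rfl⟩ := hx
          rw [← mul_assoc]
          have key : ∀ u, u ∈ Jg F m n →
              u * wordS L ∈ Wspan (F := F) (m := m) (n := n) (k + 1 + 1) := by
            intro u hu
            induction hu using Submodule.span_induction with
            | mem v hv =>
                obtain ⟨l, rfl⟩ := hv
                refine Submodule.subset_span ⟨1, l :: L, by simp [hL], ?_⟩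
                simp [wordS]
            | zero => rw [zero_mul]; exact Submodule.zero_mem _
            | add u v _ _ hu hv => rw [add_mul]; exact Submodule.add_mem _ hu hv
            | smul s u _ hu =>
                rw [smul_eq_mul, mul_assoc]
                exact Wspan_left s hu
          exact key _ (Jg_mul_mem hb r)
      | zero => rw [mul_zero]; exact Submodule.zero_mem _
      | add x y _ _ hx hy => rw [mul_add]; exact Submodule.add_mem _ hx hy
      | smul c x _ hx => rw [mul_smul_comm]; exact Submodule.smul_mem _ _ hx

lemma Kpow_nilpotent : Kpow (F := F) (m := m) (n := n) (n + 1) = ⊥ := by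
  refine le_bot_iff.mp ?_
  refine le_trans (Kpow_le_Wspan n) ?_
  rw [Wspan]
  refine Submodule.span_le.mpr fun x hx => ?_
  obtain ⟨r, L, hL, rfl⟩ := hx
  rw [wordS_zero (by omega), mul_zero]
  exact Submodule.zero_mem _



lemma ext_sub_counit_mem (w : ExtA F n) :
    w - algebraMap F (ExtA F n) (algebraMapInv w) ∈
      Ideal.span (Set.range (ι F (M := Fin n → F))) := by
  induction w using ExteriorAlgebra.induction with
  | algebraMap r =>
      rw [algebraMap_leftInverse _ r, sub_self]
      exact Ideal.zero_mem _
  | ι x =>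
      have h0 : algebraMapInv (ι F x : ExtA F n) = 0 := by
        simp [algebraMapInv]
      rw [h0, map_zero, sub_zero]
      exact Ideal.subset_span ⟨x, rfl⟩
  | mul a b ha hb =>
      have key : a * b - algebraMap F (ExtA F n) (algebraMapInv (a * b))
          = a * (b - algebraMap F (ExtA F n) (algebraMapInv b))
            + algebraMap F (ExtA F n) (algebraMapInv b)
              * (a - algebraMap F (ExtA F n) (algebraMapInv a)) := by
        rw [map_mul, map_mul]
        rw [mul_sub, mul_sub, ← Algebra.commutes (algebraMapInv b) a]
        rw [Algebra.commutes]
        abel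
      rw [key]
      exact Ideal.add_mem _ (Ideal.mul_mem_left _ _ hb) (Ideal.mul_mem_left _ _ ha)
  | add a b ha hb =>
      rw [map_add, map_add, add_sub_add_comm]
      exact Ideal.add_mem _ ha hb

lemma tmul_mem_Jg {x : ExtA F n} (hx : x ∈ Ideal.span (Set.range (ι F (M := Fin n → F))))
    (p : PolyA F m) : p ⊗ₜ x ∈ Jg F m n := by
  induction hx using Submodule.span_induction with
  | mem y hy =>
      obtain ⟨v, rfl⟩ := hy
      have hv : (ι F v : ExtA F n) = ∑ l : Fin n, v l • ι F (Pi.single l 1) := by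
        have hx2 : v = ∑ l : Fin n, v l • (Pi.single l 1 : Fin n → F) := by
          conv_lhs => rw [← Finset.univ_sum_single v]
          refine Finset.sum_congr rfl fun l _ => ?_
          rw [← Pi.single_smul, smul_eq_mul, mul_one]
        conv_lhs => rw [hx2]
        rw [map_sum]
        exact Finset.sum_congr rfl fun l _ => by rw [map_smul]
      rw [hv, TensorProduct.tmul_sum]
      refine Submodule.sum_mem _ fun l _ => ?_
      rw [← TensorProduct.smul_tmul]
      have : ((v l • p) ⊗ₜ (ι F (Pi.single l 1) : ExtA F n) : SAlg F m n)
          = ((v l • p) ⊗ₜ (1 : ExtA F n)) * xig F m n l := by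
        rw [xig, Algebra.TensorProduct.tmul_mul_tmul, mul_one, one_mul]
      rw [this]
      exact Ideal.mul_mem_left _ _ (Ideal.subset_span ⟨l, rfl⟩)
  | zero => rw [TensorProduct.tmul_zero]; exact Ideal.zero_mem _
  | add y z _ _ hy hz => rw [TensorProduct.tmul_add]; exact Ideal.add_mem _ hy hz
  | smul w y _ hy =>
      have : p ⊗ₜ (w • y) = ((1 : PolyA F m) ⊗ₜ w) * (p ⊗ₜ y : SAlg F m n) := by
        rw [Algebra.TensorProduct.tmul_mul_tmul, one_mul, smul_eq_mul]
      rw [this]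
      exact Ideal.mul_mem_left _ _ hy

lemma sub_includeLeft_projP_mem (a : SAlg F m n) :
    a - Algebra.TensorProduct.includeLeft (R := F) (S := F) (projP F m n a) ∈ Jg F m n := by
  induction a using TensorProduct.induction_on with
  | zero => simp
  | tmul p w =>
      have h1 : projP F m n (p ⊗ₜ w) = p * MvPolynomial.C (algebraMapInv w) := by
        rw [projP, Algebra.TensorProduct.lift_tmul]
        simp [Algebra.ofId_apply, MvPolynomial.algebraMap_eq]
      rw [h1]
      have h2 : (Algebra.TensorProduct.includeLeft (R := F) (S := F)
            (p * MvPolynomial.C (algebraMapInv w)) : SAlg F m n)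
          = p ⊗ₜ algebraMap F (ExtA F n) (algebraMapInv w) := by
        rw [Algebra.TensorProduct.includeLeft_apply, mul_comm,
          ← MvPolynomial.smul_eq_C_mul, TensorProduct.smul_tmul,
          Algebra.algebraMap_eq_smul_one]
      rw [h2, ← TensorProduct.tmul_sub]
      exact tmul_mem_Jg (ext_sub_counit_mem w) p
  | add a b ha hb =>
      rw [map_add, map_add, add_sub_add_comm]
      exact Ideal.add_mem _ ha hb

lemma mem_Jg_of_projP_eq_zero {a : SAlg F m n} (h : projP F m n a = 0) : a ∈ Jg F m n := by
  have := sub_includeLeft_projP_mem a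
  rwa [h, map_zero, sub_zero] at this



lemma Kpow_mul_mem_of_ne {k j : ℕ} (hj : j ≠ 0) {s t : SAlg F m n}
    (hs : s ∈ Kpow (F := F) (m := m) (n := n) k)
    (ht : t ∈ Kpow (F := F) (m := m) (n := n) j) :
    s * t ∈ Kpow (F := F) (m := m) (n := n) (k + j) := by
  cases k with
  | zero =>
      obtain ⟨j', rfl⟩ := Nat.exists_eq_succ_of_ne_zero hj
      have : s * t ∈ Kpow (F := F) (m := m) (n := n) (j' + 1) := Kpow_left s ht
      simpa using this
  | succ k => exact mem_Kpow_mul hs ht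

lemma Kpow_mul_mid {k j : ℕ} (hj : j ≠ 0) {s t : SAlg F m n}
    (hs : s ∈ Kpow (F := F) (m := m) (n := n) k) (r : SAlg F m n)
    (ht : t ∈ Kpow (F := F) (m := m) (n := n) j) :
    s * r * t ∈ Kpow (F := F) (m := m) (n := n) (k + j) := by
  cases k with
  | zero =>
      obtain ⟨j', rfl⟩ := Nat.exists_eq_succ_of_ne_zero hj
      have : s * r * t ∈ Kpow (F := F) (m := m) (n := n) (j' + 1) := Kpow_left (s * r) ht
      simpa using this
  | succ k => exact mem_Kpow_mul (Kpow_right hs r) ht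

end Aux
set_option maxHeartbeats 1000000

/-- If the images of even elements `f₁,…,f_m` in `R/J` are algebraically independent
generators of the polynomial ring and the odd elements `q₁,…,q_n` reduce mod `J²` to
combinations of the `ξ_l` with invertible coefficient matrix, then the endomorphism
`x_i ↦ f_i`, `ξ_k ↦ q_k` is an automorphism of `R`. -/
theorem endo_from_generators_is_automorphism (F : Type*) [Field F]
    (hchar : ringChar F ≠ 2) (m n : ℕ) (f : Fin m → SAlg F m n) (q : Fin n → SAlg F m n)
    (hf : ∀ i, f i ∈ evenA F m n) (hq : ∀ k, q k ∈ oddP F m n)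
    (hfgen : Function.Bijective
      (MvPolynomial.aeval (fun i => projP F m n (f i)) : PolyA F m →ₐ[F] PolyA F m))
    (c : Matrix (Fin n) (Fin n) F) (hc : IsUnit c.det)
    (hqc : ∀ k, q k - ∑ l, c k l • xig F m n l ∈ Jsq F m n)
    (φ : SAlg F m n →ₐ[F] SAlg F m n)
    (hφx : ∀ i, φ (xg F m n i) = f i) (hφξ : ∀ k, φ (xig F m n k) = q k) :
    Function.Bijective φ := by
  classical
  set S : Subalgebra F (SAlg F m n) := φ.range with hSdef
  set ψ : PolyA F m →ₐ[F] SAlg F m n :=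
    φ.comp (Algebra.TensorProduct.includeLeft (R := F) (S := F)) with hψdef
  have hproj : (projP F m n).comp ψ = MvPolynomial.aeval (fun i => projP F m n (f i)) := by
    apply MvPolynomial.algHom_ext
    intro i
    rw [AlgHom.comp_apply, MvPolynomial.aeval_X, hψdef, AlgHom.comp_apply,
      Algebra.TensorProduct.includeLeft_apply]
    have hx : (MvPolynomial.X i ⊗ₜ (1 : ExtA F n)) = xg F m n i := rfl
    rw [hx, hφx i]
  -- every element is congruent to an element of the image modulo J
  have step0 : ∀ r : SAlg F m n, ∃ s, s ∈ S ∧ r - s ∈ Jg F m n := by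
    intro r
    obtain ⟨p', hp'⟩ := hfgen.2 (projP F m n r)
    refine ⟨ψ p', ⟨_, rfl⟩, ?_⟩
    apply mem_Jg_of_projP_eq_zero
    rw [map_sub, sub_eq_zero]
    rw [← hp', ← AlgHom.comp_apply, hproj]
  -- the elements t l of the image congruent to ξ_l mod J²
  have hdc : c⁻¹ * c = 1 := Matrix.nonsing_inv_mul c hc
  set t : Fin n → SAlg F m n := fun l => ∑ k, c⁻¹ l k • q k with htdef
  have hqS : ∀ k, q k ∈ S := fun k => ⟨xig F m n k, hφξ k⟩
  have htS : ∀ l, t l ∈ S :=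
    fun l => Subalgebra.sum_mem _ fun k _ => Subalgebra.smul_mem _ (hqS k) _
  have hJsqK : ∀ a ∈ Jsq F m n, a ∈ Kpow (F := F) (m := m) (n := n) 2 := by
    intro a ha
    induction ha using Submodule.span_induction with
    | mem x hx =>
        obtain ⟨u, hu, v, hv, rfl⟩ := hx
        exact mem_Kpow_mul (mem_Kpow_one.mpr hu) (mem_Kpow_one.mpr hv)
    | zero => exact Submodule.zero_mem _
    | add x y _ _ hx hy => exact Submodule.add_mem _ hx hy
    | smul r x _ hx => rw [smul_eq_mul]; exact Kpow_left (k := 1) r hx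
  have htK : ∀ l, xig F m n l - t l ∈ Kpow (F := F) (m := m) (n := n) 2 := by
    intro l
    have hsum : ∑ k, c⁻¹ l k • (∑ j, c k j • xig F m n j) = xig F m n l := by
      have h1 : ∀ k, c⁻¹ l k • (∑ j, c k j • xig F m n j)
          = ∑ j, (c⁻¹ l k * c k j) • xig F m n j := by
        intro k
        rw [Finset.smul_sum]
        exact Finset.sum_congr rfl fun j _ => by rw [smul_smul]
      calc ∑ k, c⁻¹ l k • (∑ j, c k j • xig F m n j)
          = ∑ k, ∑ j, (c⁻¹ l k * c k j) • xig F m n j :=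
            Finset.sum_congr rfl fun k _ => h1 k
        _ = ∑ j, ∑ k, (c⁻¹ l k * c k j) • xig F m n j := Finset.sum_comm
        _ = ∑ j, (∑ k, c⁻¹ l k * c k j) • xig F m n j :=
            Finset.sum_congr rfl fun j _ => (Finset.sum_smul).symm
        _ = ∑ j, ((c⁻¹ * c) l j) • xig F m n j :=
            Finset.sum_congr rfl fun j _ => by rw [Matrix.mul_apply]
        _ = ∑ j, ((1 : Matrix (Fin n) (Fin n) F) l j) • xig F m n j := by rw [hdc]
        _ = xig F m n l := by
            rw [Finset.sum_eq_single l]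
            · rw [Matrix.one_apply_eq, one_smul]
            · intro j _ hj
              rw [Matrix.one_apply_ne (Ne.symm hj), zero_smul]
            · intro h; exact absurd (Finset.mem_univ l) h
    have key : t l - xig F m n l = ∑ k, c⁻¹ l k • (q k - ∑ j, c k j • xig F m n j) := by
      rw [htdef]
      simp only [smul_sub]
      rw [Finset.sum_sub_distrib, hsum]
    have hmem : t l - xig F m n l ∈ Kpow (F := F) (m := m) (n := n) 2 := by
      rw [key]
      exact Submodule.sum_mem _ fun k _ =>
        Submodule.smul_mem _ _ (hJsqK _ (hqc k))
    have := Submodule.neg_mem _ hmem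
    rwa [neg_sub] at this
  have htK1 : ∀ l, t l ∈ Kpow (F := F) (m := m) (n := n) 1 := by
    intro l
    have h1 : xig F m n l ∈ Kpow (F := F) (m := m) (n := n) 1 :=
      mem_Kpow_one.mpr (Ideal.subset_span ⟨l, rfl⟩)
    have h2 : xig F m n l - t l ∈ Kpow (F := F) (m := m) (n := n) 1 :=
      Kpow_mono (k := 0) (htK l)
    have := Submodule.sub_mem _ h1 h2
    rwa [sub_sub_cancel] at this
  -- the key multiplication claim
  have claim : ∀ (k : ℕ) (s : SAlg F m n), s ∈ S →
      s ∈ Kpow (F := F) (m := m) (n := n) k → ∀ b ∈ Jg F m n,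
      s * b ∈ (Subalgebra.toSubmodule S ⊓ Kpow (F := F) (m := m) (n := n) (k + 1))
        ⊔ Kpow (F := F) (m := m) (n := n) (k + 2) := by
    intro k s hsS hsK b hb
    have hb1 : b ∈ Wspan (F := F) (m := m) (n := n) 1 :=
      Kpow_le_Wspan 0 (mem_Kpow_one.mpr hb)
    clear hb
    induction hb1 using Submodule.span_induction with
    | mem x hx =>
        obtain ⟨r, L, hL, rfl⟩ := hx
        obtain ⟨l, rfl⟩ := List.length_eq_one_iff.mp hL
        have hw : wordS (F := F) (m := m) (n := n) [l] = xig F m n l := by simp [wordS]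
        rw [hw]
        obtain ⟨s', hs'S, hu'⟩ := step0 r
        have expand : s * (r * xig F m n l)
            = ((s * s') * t l + (s * s') * (xig F m n l - t l))
              + (s * (r - s')) * xig F m n l := by
          calc s * (r * xig F m n l) = (s * r) * xig F m n l := (mul_assoc _ _ _).symm
            _ = (s * (s' + (r - s'))) * xig F m n l := by
                rw [show s' + (r - s') = r by abel]
            _ = (s * s') * xig F m n l + (s * (r - s')) * xig F m n l := by
                rw [mul_add, add_mul]
            _ = ((s * s') * t l + (s * s') * (xig F m n l - t l))
                + (s * (r - s')) * xig F m n l := by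
                rw [← mul_add, show t l + (xig F m n l - t l) = xig F m n l by abel]
        rw [expand]
        refine Submodule.add_mem _ (Submodule.add_mem _ ?_ ?_) ?_
        · refine Submodule.mem_sup_left (Submodule.mem_inf.mpr ⟨?_, ?_⟩)
          · exact S.mul_mem (S.mul_mem hsS hs'S) (htS l)
          · exact Kpow_mul_mid one_ne_zero hsK s' (htK1 l)
        · exact Submodule.mem_sup_right (Kpow_mul_mid two_ne_zero hsK s' (htK l))
        · refine Submodule.mem_sup_right ?_
          have h1 : s * (r - s') ∈ Kpow (F := F) (m := m) (n := n) (k + 1) :=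
            Kpow_mul_mem_of_ne one_ne_zero hsK (mem_Kpow_one.mpr hu')
          have h2 : xig F m n l ∈ Kpow (F := F) (m := m) (n := n) 1 :=
            mem_Kpow_one.mpr (Ideal.subset_span ⟨l, rfl⟩)
          exact Kpow_mul_mem_of_ne one_ne_zero h1 h2
    | zero => rw [mul_zero]; exact Submodule.zero_mem _
    | add x y _ _ hx hy => rw [mul_add]; exact Submodule.add_mem _ hx hy
    | smul a x _ hx => rw [mul_smul_comm]; exact Submodule.smul_mem _ _ hx
  -- main filtration lemma
  have main : ∀ k : ℕ, Kpow (F := F) (m := m) (n := n) (k + 1) ≤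
      (Subalgebra.toSubmodule S ⊓ Kpow (F := F) (m := m) (n := n) (k + 1))
        ⊔ Kpow (F := F) (m := m) (n := n) (k + 2) := by
    intro k
    induction k with
    | zero =>
        intro a ha
        have h1 : (1 : SAlg F m n) ∈ S := S.one_mem
        have h0 : (1 : SAlg F m n) ∈ Kpow (F := F) (m := m) (n := n) 0 := by
          rw [Kpow, Submodule.pow_zero]
          exact Submodule.mem_one.mpr ⟨1, map_one _⟩
        have := claim 0 1 h1 h0 a (mem_Kpow_one.mp ha)
        rwa [one_mul] at this
    | succ k ih =>
        intro a ha
        rw [Kpow_succ] at ha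
        refine Submodule.mul_induction_on ha (fun x hx y hy => ?_)
          (fun x y hx hy => Submodule.add_mem _ hx hy)
        obtain ⟨s, hs, u, hu, hsu⟩ := Submodule.mem_sup.mp (ih hx)
        rw [← hsu, add_mul]
        refine Submodule.add_mem _ ?_ ?_
        · have hsS : s ∈ S := (Submodule.mem_inf.mp hs).1
          have hsK : s ∈ Kpow (F := F) (m := m) (n := n) (k + 1) :=
            (Submodule.mem_inf.mp hs).2
          exact claim (k + 1) s hsS hsK y hy
        · have hmul := mem_Kpow_mul hu (mem_Kpow_one.mpr hy)
          exact Submodule.mem_sup_right hmul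
  -- descending chain: every power of J is inside the image
  have hdown : ∀ d : ℕ, Kpow (F := F) (m := m) (n := n) (n + 1 - d)
      ≤ Subalgebra.toSubmodule S := by
    intro d
    induction d with
    | zero => rw [Nat.sub_zero, Kpow_nilpotent]; exact bot_le
    | succ d ih =>
        rcases Nat.eq_zero_or_pos (n + 1 - (d + 1)) with h0 | hpos
        · rw [h0]
          intro a ha
          rw [Kpow, Submodule.pow_zero] at ha
          obtain ⟨y, rfl⟩ := Submodule.mem_one.mp ha
          exact S.algebraMap_mem y
        · obtain ⟨k, hk⟩ : ∃ k, n + 1 - (d + 1) = k + 1 := ⟨n - (d + 1), by omega⟩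
          have hk2 : n + 1 - d = k + 2 := by omega
          rw [hk]
          refine le_trans (main k) (sup_le (le_trans inf_le_left le_rfl) ?_)
          rw [← hk2]
          exact ih
  have hsurj : Function.Surjective φ := by
    intro r
    obtain ⟨s, hsS, hu⟩ := step0 r
    have h1 : Kpow (F := F) (m := m) (n := n) 1 ≤ Subalgebra.toSubmodule S := by
      have := hdown n
      rwa [show n + 1 - n = 1 by omega] at this
    have hr : r ∈ S := by
      have hu' : (r - s) ∈ S := h1 (mem_Kpow_one.mpr hu)
      have := S.add_mem hsS hu'
      rwa [add_sub_cancel] at this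
    exact hr
  -- injectivity via the Noetherian property
  have hinj : Function.Injective φ := by
    letI : Module.Finite F (ExtA F n) := extA_finite
    haveI hN1 : IsNoetherian (PolyA F m) (SAlg F m n) :=
      isNoetherian_of_isNoetherianRing_of_finite (PolyA F m) (SAlg F m n)
    haveI hN2 : IsNoetherian (SAlg F m n) (SAlg F m n) :=
      isNoetherian_of_tower (PolyA F m) hN1
    let g : ℕ → (SAlg F m n →+* SAlg F m n) := fun k =>
      Nat.rec (RingHom.id _) (fun _ h => (φ : SAlg F m n →+* SAlg F m n).comp h) k
    have hgsucc : ∀ (k : ℕ) (a : SAlg F m n), g (k + 1) a = φ (g k a) := fun k a => rfl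
    have hmono : Monotone fun k => RingHom.ker (g k) := by
      refine monotone_nat_of_le_succ fun k a ha => ?_
      rw [RingHom.mem_ker] at ha ⊢
      rw [hgsucc, ha, map_zero]
    obtain ⟨N, hN⟩ := monotone_stabilizes_iff_noetherian.mpr hN2
      ⟨fun k => RingHom.ker (g k), hmono⟩
    have hgsurj : ∀ k, Function.Surjective (g k) := by
      intro k
      induction k with
      | zero => exact Function.surjective_id
      | succ k ih =>
          intro a
          obtain ⟨b, hb⟩ := hsurj a
          obtain ⟨d, hd⟩ := ih b
          exact ⟨d, by rw [hgsucc, hd, hb]⟩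
    have hker : ∀ a, φ a = 0 → a = 0 := by
      intro a ha
      obtain ⟨b, rfl⟩ := hgsurj N a
      have h1 : b ∈ RingHom.ker (g (N + 1)) := by
        rw [RingHom.mem_ker, hgsucc, ha]
      have heq : RingHom.ker (g N) = RingHom.ker (g (N + 1)) :=
        hN (N + 1) (Nat.le_succ N)
      have h2 : b ∈ RingHom.ker (g N) := by rw [heq]; exact h1
      exact h2
    intro a b hab
    have h1 : φ (a - b) = 0 := by rw [map_sub, hab, sub_self]
    have h2 := hker _ h1
    exact sub_eq_zero.mp h2
  exact ⟨hinj, hsurj⟩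
end
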